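/- arXiv:2012.12803 — 5 statements merged into one kernel-verified Lean document; each statement's English description precedes it below -/
import Mathlib

section
/- Let ε ≥ 0 and δ ∈ [0,1]. Suppose R is a deletion (ε,δ)-DP local randomizer on a set D with output measurable space S, with reference distribution ρ; that is, for every x ∈ D, R(x) and ρ are (ε,δ)-indistinguishable. Then there exists a local randomizer R' on D with output space S such that: (i) for every x ∈ D, R'(x) and ρ are (ε,0)-indistinguishable, and (ii) for every x ∈ D, TV(R(x), R'(x)) ≤ δ. In particular, R' is a (replacement) 2ε-DP local randomizer: for all x, x' ∈ D and all measurable E ⊆ S, R'(x)(E) ≤ e^{2ε}·R'(x')(E). -/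
open MeasureTheory ProbabilityTheory
open scoped ENNReal NNReal

namespace ShuffleDP

noncomputable section

/-- A σ-algebra on `List Z`, transported from `Σ n, Fin n → Z` through
`List.equivSigmaTuple`. -/
instance listMeasurableSpace {Z : Type*} [MeasurableSpace Z] : MeasurableSpace (List Z) :=
  MeasurableSpace.comap (List.equivSigmaTuple (α := Z)) inferInstance

/-- Hockey-stick divergence `D_{e^ε}(P‖Q) = sup_E (P(E) - e^ε Q(E))` (in `ℝ≥0∞`,
with truncated subtraction, over measurable sets `E`). -/
def hsDiv {α : Type*} [MeasurableSpace α] (ε : ℝ) (P Q : Measure α) : ℝ≥0∞ :=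
  ⨆ (E : Set α) (_ : MeasurableSet E), P E - ENNReal.ofReal (Real.exp ε) * Q E

/-- `P` and `Q` are `(ε, δ)`-indistinguishable. -/
def Indist {α : Type*} [MeasurableSpace α] (ε δ : ℝ) (P Q : Measure α) : Prop :=
  hsDiv ε P Q ≤ ENNReal.ofReal δ ∧ hsDiv ε Q P ≤ ENNReal.ofReal δ

/-- Total variation distance. -/
def tvDist {α : Type*} [MeasurableSpace α] (P Q : Measure α) : ℝ≥0∞ :=
  ⨆ (E : Set α) (_ : MeasurableSet E), (P E - Q E) ⊔ (Q E - P E)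

/-- The measure with the given mass function on a (typically countable discrete) space. -/
def ofMass {α : Type*} [MeasurableSpace α] (f : α → ℝ≥0∞) : Measure α :=
  Measure.sum fun a => f a • Measure.dirac a

/-- Mass function of the binomial distribution `Bin(m, p)`. -/
def binomMass (m : ℕ) (p : ℝ) (k : ℕ) : ℝ≥0∞ :=
  ENNReal.ofReal ((m.choose k : ℝ) * p ^ k * (1 - p) ^ (m - k))

/-- Mass function of a Bernoulli distribution with success probability `q`,
viewed as a distribution on `ℕ` supported on `{0, 1}`. -/
def bernMassNat (q : ℝ) (d : ℕ) : ℝ≥0∞ :=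
  if d = 1 then ENNReal.ofReal q else if d = 0 then ENNReal.ofReal (1 - q) else 0

/-- Joint law of `(A, C)` where `C ∼ Bin(n-1, p)` and, conditionally on `C`,
`A ∼ Bin(C, 1/2)`. -/
def pairJoint (n : ℕ) (p : ℝ) : Measure (ℕ × ℕ) :=
  ofMass fun w => binomMass (n - 1) p w.2 * binomMass w.2 (1 / 2) w.1

/-- Law of `(A + 1, C - A)`. -/
def pairP (n : ℕ) (p : ℝ) : Measure (ℕ × ℕ) :=
  (pairJoint n p).map fun w => (w.1 + 1, w.2 - w.1)

/-- Law of `(A, C - A + 1)`. -/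
def pairQ (n : ℕ) (p : ℝ) : Measure (ℕ × ℕ) :=
  (pairJoint n p).map fun w => (w.1, w.2 - w.1 + 1)

/-- Joint law of `(A, C, Δ)` where `C ∼ Bin(n-1, e^{-ε0})`, `A | C ∼ Bin(C, 1/2)` and,
independently, `Δ ∼ Bern(e^{ε0}/(e^{ε0}+1))`. -/
def cloneJoint (n : ℕ) (ε0 : ℝ) : Measure (ℕ × ℕ × ℕ) :=
  ofMass fun w =>
    binomMass (n - 1) (Real.exp (-ε0)) w.2.1 * binomMass w.2.1 (1 / 2) w.1 *
      bernMassNat (Real.exp ε0 / (Real.exp ε0 + 1)) w.2.2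

/-- Law of `(A + Δ, C - A + 1 - Δ)`. -/
def cloneP (n : ℕ) (ε0 : ℝ) : Measure (ℕ × ℕ) :=
  (cloneJoint n ε0).map fun w => (w.1 + w.2.2, w.2.1 - w.1 + 1 - w.2.2)

/-- Law of `(A + 1 - Δ, C - A + Δ)`. -/
def cloneQ (n : ℕ) (ε0 : ℝ) : Measure (ℕ × ℕ) :=
  (cloneJoint n ε0).map fun w => (w.1 + 1 - w.2.2, w.2.1 - w.1 + w.2.2)

/-- Mass function of the first three counts of `MultNom(m; p, p, p, 1-3p)`. -/
def multMass (m : ℕ) (p : ℝ) (w : ℕ × ℕ × ℕ) : ℝ≥0∞ :=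
  if w.1 + w.2.1 + w.2.2 ≤ m then
    ENNReal.ofReal ((m.choose w.1 : ℝ) * ((m - w.1).choose w.2.1 : ℝ) *
      ((m - w.1 - w.2.1).choose w.2.2 : ℝ) * p ^ w.1 * p ^ w.2.1 * p ^ w.2.2 *
      (1 - 3 * p) ^ (m - w.1 - w.2.1 - w.2.2))
  else 0

/-- Joint law of `((A, B, C), Γ)` where `(A,B,C,D') ∼ MultNom(n-1; p,p,p,1-3p)` and,
independently, `Γ ∼ Bern(q)`. -/
def multJoint (n : ℕ) (p q : ℝ) : Measure ((ℕ × ℕ × ℕ) × ℕ) :=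
  ofMass fun w => multMass (n - 1) p w.1 * bernMassNat q w.2

/-- Law of `(A + Γ, B, C + 1 - Γ)`. -/
def multT0 (n : ℕ) (p q : ℝ) : Measure (ℕ × ℕ × ℕ) :=
  (multJoint n p q).map fun w => (w.1.1 + w.2, w.1.2.1, w.1.2.2 + 1 - w.2)

/-- Law of `(A, B + Γ, C + 1 - Γ)`. -/
def multT1 (n : ℕ) (p q : ℝ) : Measure (ℕ × ℕ × ℕ) :=
  (multJoint n p q).map fun w => (w.1.1, w.1.2.1 + w.2, w.1.2.2 + 1 - w.2)

/-- Law of `Bin(c, 1/2)` on `ℕ`. -/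
def binHalf (c : ℕ) : Measure ℕ :=
  ofMass (binomMass c (1 / 2))

/-- `P_c = q·(law of A_c) + (1-q)·(law of A_c + 1)` where `A_c ∼ Bin(c, 1/2)`. -/
def shiftP (q : ℝ) (c : ℕ) : Measure ℕ :=
  ENNReal.ofReal q • binHalf c + ENNReal.ofReal (1 - q) • (binHalf c).map (· + 1)

/-- `Q_c = (1-q)·(law of A_c) + q·(law of A_c + 1)` where `A_c ∼ Bin(c, 1/2)`. -/
def shiftQ (q : ℝ) (c : ℕ) : Measure ℕ :=
  ENNReal.ofReal (1 - q) • binHalf c + ENNReal.ofReal q • (binHalf c).map (· + 1)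

/-- Sequentially run the adaptive randomizers `A` on the remaining inputs (first argument),
given the history of outputs produced so far (second argument); the index `i` of the
randomizer `A^{(i)}` is implicit as the length of the history. -/
def seqRun {D Z : Type*} [MeasurableSpace Z] (A : List Z → D → Measure Z) :
    List D → List Z → Measure (List Z)
  | [], _ => Measure.dirac []
  | x :: xs, acc => (A acc x).bind fun z => (seqRun A xs (acc ++ [z])).map fun l => z :: l

/-- The shuffled algorithm `A_s`: sample a uniformly random permutation `π` of `Fin n` and
sequentially sample `z_i ∼ A^{(i)}(z_{1:i-1}, x_{π(i)})`, returning `z_{1:n}`. -/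
def shuffled {D Z : Type*} [MeasurableSpace Z] (n : ℕ) (A : List Z → D → Measure Z)
    (X : Fin n → D) : Measure (List Z) :=
  ((n.factorial : ℝ≥0∞))⁻¹ • ∑ π : Equiv.Perm (Fin n), seqRun A (List.ofFn fun i => X (π i)) ([] : List Z)

/-- `x ↦ R x` is an `ε0`-DP local randomizer. -/
def IsLocalDP {D Z : Type*} [MeasurableSpace Z] (ε0 : ℝ) (R : D → Measure Z) : Prop :=
  ∀ x x' : D, ∀ E : Set Z, MeasurableSet E → R x E ≤ ENNReal.ofReal (Real.exp ε0) * R x' E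

/-- `x ↦ R x` is an `(ε0, δ0)`-DP local randomizer. -/
def IsLocalDPApprox {D Z : Type*} [MeasurableSpace Z] (ε0 δ0 : ℝ) (R : D → Measure Z) : Prop :=
  ∀ x x' : D, ∀ E : Set Z, MeasurableSet E →
    R x E ≤ ENNReal.ofReal (Real.exp ε0) * R x' E + ENNReal.ofReal δ0

/-- Two datasets differ in exactly one coordinate. -/
def Neighboring {D : Type*} {n : ℕ} (X X' : Fin n → D) : Prop :=
  ∃ i, X i ≠ X' i ∧ ∀ j, j ≠ i → X j = X' j

/-- The uniform distribution on `Fin k`. -/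
def unifFin (k : ℕ) : Measure (Fin k) :=
  ((k : ℝ≥0∞))⁻¹ • Measure.count

/-- The `k`-randomized response with parameter `ε0`. -/
def kRR (k : ℕ) (ε0 : ℝ) (x : Fin k) : Measure (Fin k) :=
  ENNReal.ofReal ((Real.exp ε0 - 1) / (Real.exp ε0 + k - 1)) • Measure.dirac x +
    ENNReal.ofReal (k / (Real.exp ε0 + k - 1)) • unifFin k

/-- Binary randomized response with parameter `ε0`. -/
def rr2 (ε0 : ℝ) (x : Bool) : Measure Bool :=
  ENNReal.ofReal (Real.exp ε0 / (Real.exp ε0 + 1)) • Measure.dirac x +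
    ENNReal.ofReal (1 / (Real.exp ε0 + 1)) • Measure.dirac (!x)

/-!
Take densities `p`, `r` of `P` and `ρ` with respect to `P + ρ` (so that no singular part
appears) and clamp `p` between `e^{-ε} r` and `e^ε r`. The mass cut off above is
`P E - e^ε ρ E` for `E = {e^ε r < p}`, the mass added below is `e^{-ε} ρ F - P F
≤ e^{-ε} (ρ F - e^ε P F)` for `F = {p < e^{-ε} r}`, so both are bounded by the hockey-stick
divergences. The clamped measure `ν` lies between `e^{-ε} ρ` and `e^ε ρ`, hence so does a
probability measure `Q` chosen between `ν` and `e^ε ρ` (if `ν` has mass at most `1`) or between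
`e^{-ε} ρ` and `ν` (otherwise). In both cases `P` becomes `Q` by adding a measure and removing
one of the same mass, at most `δ`, which bounds `TV(P, Q)`.
-/

section

variable {Ω : Type*} [MeasurableSpace Ω]

open Set

theorem ofReal_exp_mul_ofReal_exp_neg (ε : ℝ) :
    ENNReal.ofReal (Real.exp ε) * ENNReal.ofReal (Real.exp (-ε)) = 1 := by
  rw [← ENNReal.ofReal_mul (Real.exp_nonneg _), ← Real.exp_add, add_neg_cancel, Real.exp_zero,
    ENNReal.ofReal_one]

theorem hsDiv_eq_zero_iff {ε : ℝ} {P Q : Measure Ω} :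
    hsDiv ε P Q = 0 ↔ ∀ E, MeasurableSet E → P E ≤ ENNReal.ofReal (Real.exp ε) * Q E := by
  simp only [hsDiv, ENNReal.iSup_eq_zero, tsub_eq_zero_iff_le]

theorem le_hsDiv {ε : ℝ} {P Q : Measure Ω} {E : Set Ω} (hE : MeasurableSet E) :
    P E - ENNReal.ofReal (Real.exp ε) * Q E ≤ hsDiv ε P Q :=
  le_iSup₂ (f := fun E (_ : MeasurableSet E) => P E - ENNReal.ofReal (Real.exp ε) * Q E) E hE

theorem ofReal_exp_neg_mul_sub_le_hsDiv {ε : ℝ} (hε : 0 ≤ ε) {P Q : Measure Ω} {E : Set Ω}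
    (hE : MeasurableSet E) : ENNReal.ofReal (Real.exp (-ε)) * Q E - P E ≤ hsDiv ε Q P := by
  set U := ENNReal.ofReal (Real.exp ε)
  set L := ENNReal.ofReal (Real.exp (-ε))
  refine le_trans ?_ (le_hsDiv hE)
  rw [tsub_le_iff_right]
  calc L * Q E ≤ L * (Q E - U * P E + U * P E) := by gcongr; exact le_tsub_add
    _ = L * (Q E - U * P E) + P E := by
      rw [mul_add, ← mul_assoc, mul_comm L U, ofReal_exp_mul_ofReal_exp_neg, one_mul]
    _ ≤ Q E - U * P E + P E := by
      gcongr
      exact mul_le_of_le_one_left'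
        (ENNReal.ofReal_le_one.mpr (Real.exp_le_one_iff.mpr (neg_nonpos.mpr hε)))

theorem indist_zero_of_le_smul {ε : ℝ} {P Q : Measure Ω}
    (hPQ : P ≤ ENNReal.ofReal (Real.exp ε) • Q) (hQP : Q ≤ ENNReal.ofReal (Real.exp ε) • P) :
    Indist ε 0 P Q := by
  simp only [Indist, ENNReal.ofReal_zero, nonpos_iff_eq_zero, hsDiv_eq_zero_iff]
  exact ⟨fun E _ => hPQ E, fun E _ => hQP E⟩

theorem isLocalDP_two_mul_of_indist {D : Type*} {ε : ℝ} {R : D → Measure Ω} {ρ : Measure Ω}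
    (h : ∀ x, Indist ε 0 (R x) ρ) : IsLocalDP (2 * ε) R := by
  simp only [Indist, ENNReal.ofReal_zero, nonpos_iff_eq_zero, hsDiv_eq_zero_iff] at h
  intro x x' E hE
  calc R x E ≤ ENNReal.ofReal (Real.exp ε) * ρ E := (h x).1 E hE
    _ ≤ ENNReal.ofReal (Real.exp ε) * (ENNReal.ofReal (Real.exp ε) * R x' E) := by
      gcongr; exact (h x').2 E hE
    _ = ENNReal.ofReal (Real.exp (2 * ε)) * R x' E := by
      rw [two_mul, Real.exp_add, ENNReal.ofReal_mul (Real.exp_nonneg _), mul_assoc]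

theorem tvDist_comm (P Q : Measure Ω) : tvDist P Q = tvDist Q P := by
  simp only [tvDist, sup_comm]

theorem tvDist_le_of_add_eq {P Q ξ ζ : Measure Ω} [IsFiniteMeasure P] (hPQ : P univ = Q univ)
    (h : P + ζ = Q + ξ) : tvDist P Q ≤ ξ univ := by
  have hmass : ζ univ = ξ univ := by
    have := congrArg (· univ) h
    simp only [Measure.add_apply, ← hPQ] at this
    exact (ENNReal.add_right_inj (measure_ne_top P univ)).mp this
  refine iSup₂_le fun E hE => max_le ?_ ?_
  · refine tsub_le_iff_left.mpr ?_
    calc P E ≤ (P + ζ) E := Measure.le_add_right le_rfl E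
      _ = Q E + ξ E := by rw [h, Measure.add_apply]
      _ ≤ Q E + ξ univ := by gcongr; exact subset_univ E
  · refine tsub_le_iff_left.mpr ?_
    calc Q E ≤ (Q + ξ) E := Measure.le_add_right le_rfl E
      _ = P E + ζ E := by rw [← h, Measure.add_apply]
      _ ≤ P E + ξ univ := by rw [← hmass]; gcongr; exact subset_univ E

theorem add_tsub_eq_max_min_add_tsub {M : Type*} [AddCommMonoid M] [LinearOrder M]
    [CanonicallyOrderedAdd M] [Sub M] [OrderedSub M] {l u : M} (hlu : l ≤ u) (x : M) :
    x + (l - x) = max l (min u x) + (x - u) := by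
  rcases le_total x l with hxl | hlx
  · rw [add_tsub_cancel_of_le hxl, min_eq_right (hxl.trans hlu), max_eq_left hxl,
      tsub_eq_zero_of_le (hxl.trans hlu), add_zero]
  rcases le_total x u with hxu | hux
  · rw [tsub_eq_zero_of_le hlx, min_eq_right hxu, max_eq_right hlx, tsub_eq_zero_of_le hxu]
  · rw [tsub_eq_zero_of_le hlx, min_eq_left hux, max_eq_right hlu, add_zero,
      add_tsub_cancel_of_le hux]

theorem withDensity_tsub_apply_univ_add {μ : Measure Ω} {f h : Ω → ℝ≥0∞} (hf : Measurable f)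
    (hh : Measurable h) :
    μ.withDensity (f - h) univ + μ.withDensity h {x | h x < f x} =
      μ.withDensity f {x | h x < f x} := by
  have hE : MeasurableSet {x | h x < f x} := measurableSet_lt hh hf
  have hsupp : (f - h).support ⊆ {x | h x < f x} := fun x hx =>
    tsub_pos_iff_lt.mp (pos_iff_ne_zero.mpr hx)
  rw [withDensity_apply _ MeasurableSet.univ, withDensity_apply _ hE, withDensity_apply _ hE,
    Measure.restrict_univ, ← setLIntegral_eq_of_support_subset hsupp,
    ← lintegral_add_right _ hh]
  exact setLIntegral_congr_fun hE fun x hx => tsub_add_cancel_of_le (le_of_lt hx)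

theorem exists_clamp_between_smul (P ρ : Measure Ω) [IsFiniteMeasure P] [IsFiniteMeasure ρ]
    {a b : ℝ≥0∞} (hab : a ≤ b) (hb : b ≠ ∞) :
    ∃ ν ξ ζ : Measure Ω, a • ρ ≤ ν ∧ ν ≤ b • ρ ∧ P + ζ = ν + ξ ∧
      (∃ E, MeasurableSet E ∧ ξ univ ≤ P E - b * ρ E) ∧
      (∃ F, MeasurableSet F ∧ ζ univ ≤ a * ρ F - P F) := by
  set μ := P + ρ
  set p := P.rnDeriv μ
  set r := ρ.rnDeriv μ
  have hp : Measurable p := Measure.measurable_rnDeriv _ _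
  have hr : Measurable r := Measure.measurable_rnDeriv _ _
  have hP : μ.withDensity p = P :=
    Measure.withDensity_rnDeriv_eq _ _ (Measure.AbsolutelyContinuous.rfl.add_right ρ)
  have hρ : ∀ c : ℝ≥0∞, μ.withDensity (c • r) = c • ρ := fun c => by
    rw [withDensity_smul c hr,
      Measure.withDensity_rnDeriv_eq _ _ (Measure.AbsolutelyContinuous.rfl.add_right' P)]
  refine ⟨μ.withDensity fun x => max (a * r x) (min (b * r x) (p x)), μ.withDensity (p - b • r),
    μ.withDensity (a • r - p), ?_, ?_, ?_, ⟨_, measurableSet_lt (hr.const_smul b) hp, ?_⟩,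
    ⟨_, measurableSet_lt hp (hr.const_smul a), ?_⟩⟩
  · rw [← hρ]
    exact withDensity_mono (ae_of_all _ fun x => le_max_left _ _)
  · rw [← hρ]
    exact withDensity_mono (ae_of_all _ fun x =>
      max_le (mul_le_mul_left hab (r x)) (min_le_left _ _))
  · rw [← hP, ← withDensity_add_left hp, ← withDensity_add_left (by fun_prop)]
    congr 1
    funext x
    exact add_tsub_eq_max_min_add_tsub (mul_le_mul_left hab (r x)) (p x)
  · refine ENNReal.le_sub_of_add_le_right (by finiteness) ?_
    rw [← smul_eq_mul, ← Measure.smul_apply, ← hρ, ← hP]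
    exact (withDensity_tsub_apply_univ_add hp (hr.const_smul b)).le
  · refine ENNReal.le_sub_of_add_le_right (by finiteness) ?_
    rw [← smul_eq_mul, ← Measure.smul_apply, ← hρ, ← hP]
    exact (withDensity_tsub_apply_univ_add (hr.const_smul a) hp).le

theorem exists_isProbabilityMeasure_between {μ₁ μ₂ : Measure Ω} [IsFiniteMeasure μ₂]
    (h : μ₁ ≤ μ₂) (h₁ : μ₁ univ ≤ 1) (h₂ : 1 ≤ μ₂ univ) :
    ∃ Q γ₁ γ₂ : Measure Ω, IsProbabilityMeasure Q ∧ Q = μ₁ + γ₁ ∧ μ₂ = Q + γ₂ := by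
  have : IsFiniteMeasure μ₁ := isFiniteMeasure_of_le μ₂ h
  set D := μ₂ - μ₁
  have hD : μ₁ + D = μ₂ := by rw [add_comm]; exact Measure.sub_add_cancel_of_le h
  have hgap : 1 - μ₁ univ ≤ D univ := by
    rw [← hD, Measure.add_apply] at h₂
    exact tsub_le_iff_left.mpr h₂
  set t := (1 - μ₁ univ) / D univ
  have ht : t ≤ 1 := ENNReal.div_le_of_le_mul (by rwa [one_mul])
  have htD : t * D univ = 1 - μ₁ univ := by
    rcases eq_or_ne (D univ) 0 with h0 | h0
    · rw [h0, mul_zero]; exact (nonpos_iff_eq_zero.mp (h0 ▸ hgap)).symm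
    · exact ENNReal.div_mul_cancel h0 (measure_ne_top D univ)
  refine ⟨μ₁ + t • D, t • D, (1 - t) • D, ⟨?_⟩, rfl, ?_⟩
  · rw [Measure.add_apply, Measure.smul_apply, smul_eq_mul, htD, add_tsub_cancel_of_le h₁]
  · rw [add_assoc, ← add_smul, add_tsub_cancel_of_le ht, one_smul, hD]

theorem exists_pure_approximation {ε : ℝ} (hε : 0 ≤ ε) (P ρ : Measure Ω)
    [IsProbabilityMeasure P] [IsProbabilityMeasure ρ] :
    ∃ Q : Measure Ω, IsProbabilityMeasure Q ∧ Q ≤ ENNReal.ofReal (Real.exp ε) • ρ ∧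
      ρ ≤ ENNReal.ofReal (Real.exp ε) • Q ∧ tvDist P Q ≤ max (hsDiv ε P ρ) (hsDiv ε ρ P) := by
  set U := ENNReal.ofReal (Real.exp ε)
  set L := ENNReal.ofReal (Real.exp (-ε))
  have hUL : U * L = 1 := ofReal_exp_mul_ofReal_exp_neg ε
  have hL : L ≤ 1 := ENNReal.ofReal_le_one.mpr (Real.exp_le_one_iff.mpr (neg_nonpos.mpr hε))
  have hU : 1 ≤ U := ENNReal.one_le_ofReal.mpr (Real.one_le_exp hε)
  obtain ⟨ν, ξ, ζ, hLν, hνU, hdec, ⟨E, hE, hξ⟩, ⟨F, hF, hζ⟩⟩ :=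
    exists_clamp_between_smul P ρ (hL.trans hU) ENNReal.ofReal_ne_top
  have hξ' : ξ univ ≤ hsDiv ε P ρ := hξ.trans (le_hsDiv hE)
  have hζ' : ζ univ ≤ hsDiv ε ρ P := hζ.trans (ofReal_exp_neg_mul_sub_le_hsDiv hε hF)
  have hρ_le : ∀ {Q : Measure Ω}, L • ρ ≤ Q → ρ ≤ U • Q := fun {Q} hQ E => by
    simpa [← mul_assoc, hUL] using mul_le_mul_right (hQ E) U
  have : IsFiniteMeasure (U • ρ) := ρ.smul_finite ENNReal.ofReal_ne_top
  have : IsFiniteMeasure ν := isFiniteMeasure_of_le _ hνU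
  rcases le_total (ν univ) 1 with hν | hν
  · obtain ⟨Q, γ₁, γ₂, hQ, rfl, hQU⟩ := exists_isProbabilityMeasure_between hνU hν (by simpa)
    refine ⟨ν + γ₁, hQ, hQU ▸ Measure.le_add_right le_rfl, hρ_le (Measure.le_add_right hLν), ?_⟩
    refine (tvDist_le_of_add_eq (Q := ν + γ₁) (ξ := ξ) (ζ := ζ + γ₁) (by simp) ?_).trans
      (hξ'.trans le_sup_left)
    rw [← add_assoc, hdec, add_right_comm]
  · obtain ⟨Q, γ₁, γ₂, hQ, hQL, rfl⟩ := exists_isProbabilityMeasure_between hLν (by simpa) hν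
    refine ⟨Q, hQ, (Measure.le_add_right le_rfl).trans hνU,
      hρ_le (hQL ▸ Measure.le_add_right le_rfl), ?_⟩
    rw [tvDist_comm]
    refine (tvDist_le_of_add_eq (P := Q) (ξ := ζ) (ζ := γ₂ + ξ) (by simp) ?_).trans
      (hζ'.trans le_sup_right)
    rw [hdec, add_assoc]

end

theorem approx_to_pure_deletion_general {D S : Type*} [MeasurableSpace S]
    (ε δ : ℝ) (hε : 0 ≤ ε)
    (R : D → Measure S) (hR : ∀ x, IsProbabilityMeasure (R x))
    (ρ : Measure S) (hρ : IsProbabilityMeasure ρ)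
    (hdel : ∀ x, Indist ε δ (R x) ρ) :
    ∃ R' : D → Measure S,
      (∀ x, IsProbabilityMeasure (R' x)) ∧
      (∀ x, Indist ε 0 (R' x) ρ) ∧
      (∀ x, tvDist (R x) (R' x) ≤ ENNReal.ofReal δ) ∧
      IsLocalDP (2 * ε) R' := by
  choose R' hprob hR'ρ hρR' htv using fun x => exists_pure_approximation hε (R x) ρ
  have hpure : ∀ x, Indist ε 0 (R' x) ρ := fun x => indist_zero_of_le_smul (hR'ρ x) (hρR' x)
  exact ⟨R', hprob, hpure, fun x => (htv x).trans (max_le (hdel x).1 (hdel x).2),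
    isLocalDP_two_mul_of_indist hpure⟩

/-- **Lemma 3.7 (from approximate to pure deletion DP).** Any deletion `(ε, δ)`-DP local
randomizer `R` with reference distribution `ρ` can be replaced by a deletion `ε`-DP local
randomizer `R'` (same reference distribution) with `TV(R(x), R'(x)) ≤ δ` for every `x`;
in particular `R'` is a replacement `2ε`-DP local randomizer. -/
theorem approx_to_pure_deletion {D S : Type*} [MeasurableSpace S]
    (ε δ : ℝ) (hε : 0 ≤ ε) (hδ : δ ∈ Set.Icc (0 : ℝ) 1)
    (R : D → Measure S) (hR : ∀ x, IsProbabilityMeasure (R x))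
    (ρ : Measure S) (hρ : IsProbabilityMeasure ρ)
    (hdel : ∀ x, Indist ε δ (R x) ρ) :
    ∃ R' : D → Measure S,
      (∀ x, IsProbabilityMeasure (R' x)) ∧
      (∀ x, Indist ε 0 (R' x) ρ) ∧
      (∀ x, tvDist (R x) (R' x) ≤ ENNReal.ofReal δ) ∧
      IsLocalDP (2 * ε) R' :=
  approx_to_pure_deletion_general ε δ hε R hR ρ hρ hdel

end

end ShuffleDP
end

section
/- Let ε0 > 0 and q = e^{ε0}/(e^{ε0}+1). For c ∈ ℕ let A_c ∼ Bin(c, 1/2), and define probability distributions on ℕ by P_c = q·(law of A_c) + (1−q)·(law of A_c + 1) and Q_c = (1−q)·(law of A_c) + q·(law of A_c + 1). Then for every ε with 0 ≤ ε < ε0 and all natural numbers c > c', one has D_{e^ε}(P_c‖Q_c) ≤ D_{e^ε}(P_{c'}‖Q_{c'}) and D_{e^ε}(Q_c‖P_c) ≤ D_{e^ε}(Q_{c'}‖P_{c'}). -/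
open MeasureTheory ProbabilityTheory
open scoped ENNReal NNReal

namespace ShuffleDP

noncomputable section

/-! With `M_p μ := p·μ + (1-p)·(μ shifted by one)` we have `P_c = M_q Bin(c,½)`,
`Q_c = M_{1-q} Bin(c,½)` and `Bin(c+1,½) = M_{½} Bin(c,½)`. The operators `M_p` commute, so
`P_{c+1} = M_{½} P_c` and `Q_{c+1} = M_{½} Q_c`. The hockey-stick divergence is jointly convex
and does not increase under pushforward, hence `M_{½}` cannot increase it. -/

lemma hsDiv_map_le {α β : Type*} [MeasurableSpace α] [MeasurableSpace β] (ε : ℝ)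
    (P Q : Measure α) {f : α → β} (hf : Measurable f) :
    hsDiv ε (P.map f) (Q.map f) ≤ hsDiv ε P Q := by
  refine iSup₂_le fun E hE => ?_
  rw [Measure.map_apply hf hE, Measure.map_apply hf hE]
  exact le_iSup₂ (f := fun E _ => P E - ENNReal.ofReal (Real.exp ε) * Q E) (f ⁻¹' E) (hf hE)

lemma hsDiv_add_smul_le {α : Type*} [MeasurableSpace α] (ε : ℝ) (a b : ℝ≥0∞)
    (P₁ P₂ Q₁ Q₂ : Measure α) :
    hsDiv ε (a • P₁ + b • P₂) (a • Q₁ + b • Q₂) ≤ a * hsDiv ε P₁ Q₁ + b * hsDiv ε P₂ Q₂ := by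
  refine iSup₂_le fun E hE => ?_
  set r := ENNReal.ofReal (Real.exp ε)
  have hD₁ : P₁ E - r * Q₁ E ≤ hsDiv ε P₁ Q₁ := le_iSup₂ (f := fun E _ => P₁ E - r * Q₁ E) E hE
  have hD₂ : P₂ E - r * Q₂ E ≤ hsDiv ε P₂ Q₂ := le_iSup₂ (f := fun E _ => P₂ E - r * Q₂ E) E hE
  simp only [Measure.add_apply, Measure.smul_apply, smul_eq_mul]
  calc a * P₁ E + b * P₂ E - r * (a * Q₁ E + b * Q₂ E)
      = a * P₁ E + b * P₂ E - (a * (r * Q₁ E) + b * (r * Q₂ E)) := by ring_nf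
    _ ≤ (a * P₁ E - a * (r * Q₁ E)) + (b * P₂ E - b * (r * Q₂ E)) := add_tsub_add_le_tsub_add_tsub
    _ ≤ a * (P₁ E - r * Q₁ E) + b * (P₂ E - r * Q₂ E) := add_le_add le_mul_tsub le_mul_tsub
    _ ≤ a * hsDiv ε P₁ Q₁ + b * hsDiv ε P₂ Q₂ := by gcongr

def shiftMix (p : ℝ) (μ : Measure ℕ) : Measure ℕ :=
  ENNReal.ofReal p • μ + ENNReal.ofReal (1 - p) • μ.map (· + 1)

lemma hsDiv_shiftMix_le (ε : ℝ) {p : ℝ} (hp₀ : 0 ≤ p) (hp₁ : p ≤ 1) (P Q : Measure ℕ) :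
    hsDiv ε (shiftMix p P) (shiftMix p Q) ≤ hsDiv ε P Q :=
  calc hsDiv ε (shiftMix p P) (shiftMix p Q)
      ≤ ENNReal.ofReal p * hsDiv ε P Q + ENNReal.ofReal (1 - p) *
          hsDiv ε (P.map (· + 1)) (Q.map (· + 1)) := hsDiv_add_smul_le ..
    _ ≤ ENNReal.ofReal p * hsDiv ε P Q + ENNReal.ofReal (1 - p) * hsDiv ε P Q := by
        gcongr; exact hsDiv_map_le ε P Q measurable_from_nat
    _ = hsDiv ε P Q := by
        rw [← add_mul, ← ENNReal.ofReal_add hp₀ (by linarith), add_sub_cancel,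
          ENNReal.ofReal_one, one_mul]

lemma shiftMix_comm (p p' : ℝ) (μ : Measure ℕ) :
    shiftMix p (shiftMix p' μ) = shiftMix p' (shiftMix p μ) := by
  simp only [shiftMix, Measure.map_add _ _ measurable_from_nat, Measure.map_smul,
    Measure.map_map measurable_from_nat measurable_from_nat]
  module

lemma ofMass_singleton {α : Type*} [MeasurableSpace α] [MeasurableSingletonClass α]
    (f : α → ℝ≥0∞) (a : α) : ofMass f {a} = f a := by
  rw [ofMass, Measure.sum_apply _ (measurableSet_singleton a),
    tsum_eq_single a fun b hb => by simp [hb]]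
  simp

lemma binomMass_half (m k : ℕ) :
    binomMass m (1 / 2) k = ENNReal.ofReal ((m.choose k : ℝ) * (1 / 2) ^ m) := by
  rcases le_or_gt k m with h | h
  · rw [binomMass, show (1 : ℝ) - 1 / 2 = 1 / 2 by norm_num, mul_assoc, ← pow_add,
      Nat.add_sub_cancel' h]
  · simp [binomMass, Nat.choose_eq_zero_of_lt h]

lemma binomMass_half_succ_succ (c k : ℕ) :
    binomMass (c + 1) (1 / 2) (k + 1) =
      ENNReal.ofReal (1 / 2) * binomMass c (1 / 2) (k + 1) +
        ENNReal.ofReal (1 / 2) * binomMass c (1 / 2) k := by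
  simp only [binomMass_half, ← ENNReal.ofReal_mul (by norm_num : (0 : ℝ) ≤ 1 / 2)]
  rw [← ENNReal.ofReal_add (by positivity) (by positivity), Nat.choose_succ_succ', pow_succ]
  push_cast
  ring_nf

lemma binomMass_half_succ_zero (c : ℕ) :
    binomMass (c + 1) (1 / 2) 0 = ENNReal.ofReal (1 / 2) * binomMass c (1 / 2) 0 := by
  simp only [binomMass_half, ← ENNReal.ofReal_mul (by norm_num : (0 : ℝ) ≤ 1 / 2)]
  simp [pow_succ, mul_comm]

lemma binHalf_succ (c : ℕ) : binHalf (c + 1) = shiftMix (1 / 2) (binHalf c) := by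
  refine Measure.ext_of_singleton fun k => ?_
  simp only [shiftMix, Measure.add_apply, Measure.smul_apply, smul_eq_mul,
    Measure.map_apply measurable_from_nat (measurableSet_singleton k), binHalf, ofMass_singleton]
  rcases k with _ | k
  · have h : (· + 1) ⁻¹' ({0} : Set ℕ) = ∅ := by ext; simp
    rw [h, measure_empty, mul_zero, add_zero, binomMass_half_succ_zero]
  · have h : (· + 1) ⁻¹' ({k + 1} : Set ℕ) = {k} := by ext; simp
    rw [h, ofMass_singleton, binomMass_half_succ_succ]
    norm_num

lemma antitone_hsDiv_shiftMix_binHalf (ε p p' : ℝ) :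
    Antitone fun c => hsDiv ε (shiftMix p (binHalf c)) (shiftMix p' (binHalf c)) := by
  refine antitone_nat_of_succ_le fun c => ?_
  simp only [binHalf_succ, shiftMix_comm _ (1 / 2)]
  exact hsDiv_shiftMix_le ε (by norm_num) (by norm_num) _ _

lemma shiftP_eq_shiftMix (q : ℝ) (c : ℕ) : shiftP q c = shiftMix q (binHalf c) := rfl

lemma shiftQ_eq_shiftMix (q : ℝ) (c : ℕ) : shiftQ q c = shiftMix (1 - q) (binHalf c) := by
  rw [shiftQ, shiftMix, sub_sub_cancel]

theorem shifted_binom_divergence_mono_general (ε0 : ℝ)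
    (q : ℝ) :
    ∀ ε : ℝ, 0 ≤ ε → ε < ε0 → ∀ c c' : ℕ, c' < c →
      hsDiv ε (shiftP q c) (shiftQ q c) ≤ hsDiv ε (shiftP q c') (shiftQ q c') ∧
      hsDiv ε (shiftQ q c) (shiftP q c) ≤ hsDiv ε (shiftQ q c') (shiftP q c') := by
  intro ε _ _ c c' hcc
  simp only [shiftP_eq_shiftMix, shiftQ_eq_shiftMix]
  exact ⟨antitone_hsDiv_shiftMix_binHalf ε q (1 - q) hcc.le,
    antitone_hsDiv_shiftMix_binHalf ε (1 - q) q hcc.le⟩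

/-- **Lemma C.3 (monotonicity in `c` of the divergence between shifted binomials).**
With `q = e^ε0/(e^ε0+1)`, `P_c = q·Bin(c,1/2) + (1-q)·(Bin(c,1/2)+1)` and
`Q_c = (1-q)·Bin(c,1/2) + q·(Bin(c,1/2)+1)`, the hockey-stick divergences
`D_{e^ε}(P_c‖Q_c)` and `D_{e^ε}(Q_c‖P_c)` are nonincreasing in `c` for `0 ≤ ε < ε0`. -/
theorem shifted_binom_divergence_mono (ε0 : ℝ) (hε0 : 0 < ε0)
    (q : ℝ) (hq : q = Real.exp ε0 / (Real.exp ε0 + 1)) :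
    ∀ ε : ℝ, 0 ≤ ε → ε < ε0 → ∀ c c' : ℕ, c' < c →
      hsDiv ε (shiftP q c) (shiftQ q c) ≤ hsDiv ε (shiftP q c') (shiftQ q c') ∧
      hsDiv ε (shiftQ q c) (shiftP q c) ≤ hsDiv ε (shiftQ q c') (shiftP q c') :=
  shifted_binom_divergence_mono_general ε0 q

end

end ShuffleDP
end

section
/- Let ε0 > 0 and let μ, ν_0, ν_1 be probability measures on a measurable space S such that for all measurable E ⊆ S, ν_0(E) ≤ e^{ε0}·μ(E) and ν_1(E) ≤ e^{ε0}·μ(E). Then there exists a probability measure LO on S such that μ = (1/(2e^{ε0}))·ν_0 + (1/(2e^{ε0}))·ν_1 + (1 − e^{−ε0})·LO. -/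
open MeasureTheory ProbabilityTheory
open scoped ENNReal NNReal

namespace ShuffleDP

noncomputable section

/-! The two clones `ν₀, ν₁`, each weighted by `1/(2e^ε0)`, fit under `μ` because each is at most
`e^ε0 μ`; they carry total mass `e^{-ε0}`, so what is left of `μ`, normalised by its mass
`1 - e^{-ε0}`, is the probability measure `LO`. -/

theorem Measure.smul_add_smul_le_of_le_smul {S : Type*} [MeasurableSpace S]
    {μ ν₀ ν₁ : Measure S} {k c d : ℝ≥0∞} (h₀ : ν₀ ≤ k • μ) (h₁ : ν₁ ≤ k • μ)
    (hcd : c * k + d * k ≤ 1) : c • ν₀ + d • ν₁ ≤ μ :=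
  calc c • ν₀ + d • ν₁ ≤ c • k • μ + d • k • μ := by gcongr
    _ = (c * k + d * k) • μ := by rw [smul_smul, smul_smul, add_smul]
    _ ≤ (1 : ℝ≥0∞) • μ := by gcongr
    _ = μ := one_smul _ _

theorem Measure.exists_isProbabilityMeasure_eq_add_smul_of_le {S : Type*} [MeasurableSpace S]
    {μ ν : Measure S} [IsFiniteMeasure μ] (hle : ν ≤ μ) {a : ℝ≥0∞} (ha : a ≠ 0)
    (hmass : μ Set.univ = ν Set.univ + a) :
    ∃ ρ : Measure S, IsProbabilityMeasure ρ ∧ μ = ν + a • ρ := by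
  have : IsFiniteMeasure ν := isFiniteMeasure_of_le μ hle
  have ha_top : a ≠ ⊤ :=
    ne_top_of_le_ne_top (measure_ne_top μ Set.univ) (hmass ▸ le_add_self)
  have hrest : (μ - ν) Set.univ = a := by
    rw [Measure.sub_apply MeasurableSet.univ hle, hmass,
      ENNReal.add_sub_cancel_left (measure_ne_top ν Set.univ)]
  refine ⟨a⁻¹ • (μ - ν), ⟨?_⟩, ?_⟩
  · rw [Measure.smul_apply, hrest, smul_eq_mul, ENNReal.inv_mul_cancel ha ha_top]
  · rw [smul_smul, ENNReal.mul_inv_cancel ha ha_top, one_smul, add_comm,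
      Measure.sub_add_cancel_of_le hle]

/-- **Decomposition of an `ε0`-DP randomizer's output into clones and a leftover.**
If `ν₀(E) ≤ e^ε0 μ(E)` and `ν₁(E) ≤ e^ε0 μ(E)` for all measurable `E`, then
`μ = (1/(2e^ε0)) ν₀ + (1/(2e^ε0)) ν₁ + (1 - e^{-ε0}) LO` for some probability measure `LO`. -/
theorem mixture_decomposition {S : Type*} [MeasurableSpace S]
    (ε0 : ℝ) (hε0 : 0 < ε0)
    (μ ν₀ ν₁ : Measure S)
    (hμ : IsProbabilityMeasure μ) (hν₀ : IsProbabilityMeasure ν₀)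
    (hν₁ : IsProbabilityMeasure ν₁)
    (h0 : ∀ E : Set S, MeasurableSet E → ν₀ E ≤ ENNReal.ofReal (Real.exp ε0) * μ E)
    (h1 : ∀ E : Set S, MeasurableSet E → ν₁ E ≤ ENNReal.ofReal (Real.exp ε0) * μ E) :
    ∃ LO : Measure S, IsProbabilityMeasure LO ∧
      μ = ENNReal.ofReal (1 / (2 * Real.exp ε0)) • ν₀ +
        ENNReal.ofReal (1 / (2 * Real.exp ε0)) • ν₁ +
        ENNReal.ofReal (1 - Real.exp (-ε0)) • LO := by
  have he : 0 < Real.exp ε0 := Real.exp_pos ε0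
  have hleft : 0 < 1 - Real.exp (-ε0) := sub_pos.2 (Real.exp_lt_one_iff.2 (neg_lt_zero.2 hε0))
  have hclones : ENNReal.ofReal (1 / (2 * Real.exp ε0)) • ν₀ +
      ENNReal.ofReal (1 / (2 * Real.exp ε0)) • ν₁ ≤ μ := by
    refine Measure.smul_add_smul_le_of_le_smul (Measure.le_iff.2 h0) (Measure.le_iff.2 h1) ?_
    rw [← ENNReal.ofReal_mul (by positivity), ← ENNReal.ofReal_add (by positivity) (by positivity)]
    exact ENNReal.ofReal_le_one.2 (by field_simp; norm_num)
  refine Measure.exists_isProbabilityMeasure_eq_add_smul_of_le hclones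
    (ENNReal.ofReal_pos.2 hleft).ne' ?_
  simp only [Measure.add_apply, Measure.smul_apply, measure_univ, smul_eq_mul, mul_one]
  rw [← ENNReal.ofReal_add (by positivity) (by positivity),
    ← ENNReal.ofReal_add (by positivity) hleft.le, Real.exp_neg, eq_comm, ENNReal.ofReal_eq_one]
  field_simp
  ring

end

end ShuffleDP
end

section
/- Let k ≥ 2 be an integer, ε0 > 0, and set p = k/((k+1)·(e^{ε0}+k−1)). Then for any two distinct elements j_0, j_1 ∈ [k] and any x ∈ [k], there exists a probability distribution LO on [k] such that kRR(x) = p·Unif([k]) + p·δ_{j_0} + p·δ_{j_1} + (1−3p)·LO, where kRR is the k-randomized response with parameter ε0. -/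
open MeasureTheory ProbabilityTheory
open scoped ENNReal NNReal

namespace ShuffleDP

noncomputable section

/-! Since `k/(e^ε0+k-1) = (k+1)p`, the uniform part of `kRR x` is `p·Unif + p·count`, and
`p·count = p·δ_{j₀} + p·δ_{j₁} + p·count|_{{j₀,j₁}ᶜ}`. The leftover
`(e^ε0-1)/(e^ε0+k-1)·δ_x + p·count|_{{j₀,j₁}ᶜ}` has mass `1 - 3p`, which is positive because
`(k+1)(e^ε0+k-1) > k(k+1) ≥ 3k`, so normalising it gives `LO`. -/

lemma exists_isProbabilityMeasure_eq_measure_univ_smul {α : Type*} [MeasurableSpace α]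
    {μ : Measure α} (h0 : μ Set.univ ≠ 0) (htop : μ Set.univ ≠ ∞) :
    ∃ ν : Measure α, IsProbabilityMeasure ν ∧ μ = μ Set.univ • ν :=
  ⟨(μ Set.univ)⁻¹ • μ, ⟨by simp [ENNReal.inv_mul_cancel h0 htop]⟩,
    by rw [smul_smul, ENNReal.mul_inv_cancel h0 htop, one_smul]⟩

lemma count_eq_dirac_add_dirac_add_restrict_compl {α : Type*} [MeasurableSpace α]
    [MeasurableSingletonClass α] {i j : α} (hij : i ≠ j) :
    (Measure.count : Measure α) =
      Measure.dirac i + Measure.dirac j + Measure.count.restrict ({i, j}ᶜ : Set α) := by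
  have hpair : Measure.count.restrict ({i, j} : Set α) = Measure.dirac i + Measure.dirac j := by
    rw [Set.insert_eq, Measure.restrict_union (Set.disjoint_singleton.mpr hij)
        (measurableSet_singleton j), Measure.restrict_singleton, Measure.restrict_singleton,
      Measure.count_singleton, Measure.count_singleton, one_smul, one_smul]
  rw [← hpair, Measure.restrict_add_restrict_compl (Set.toFinite _).measurableSet]

lemma count_compl_pair {α : Type*} [MeasurableSpace α] [MeasurableSingletonClass α]
    [Fintype α] {i j : α} (hij : i ≠ j) :
    Measure.count ({i, j}ᶜ : Set α) = ((Fintype.card α - 2 : ℕ) : ℝ≥0∞) := by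
  classical
  rw [← Finset.coe_pair, ← Finset.coe_compl, Measure.count_apply_finset,
    Finset.card_compl, Finset.card_pair hij]

lemma natCast_smul_unifFin {k : ℕ} (hk : k ≠ 0) :
    (k : ℝ≥0∞) • unifFin k = Measure.count := by
  rw [unifFin, smul_smul, ENNReal.mul_inv_cancel (by exact_mod_cast hk) (ENNReal.natCast_ne_top k),
    one_smul]

lemma ofReal_succ_mul_smul_unifFin {k : ℕ} (hk : k ≠ 0) (p : ℝ) :
    ENNReal.ofReal ((k + 1) * p) • unifFin k =
      ENNReal.ofReal p • unifFin k + ENNReal.ofReal p • Measure.count := by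
  rw [← natCast_smul_unifFin hk, smul_smul, ← add_smul, ENNReal.ofReal_mul (by positivity),
    ENNReal.ofReal_add (by positivity) zero_le_one, ENNReal.ofReal_natCast, ENNReal.ofReal_one]
  ring_nf

lemma div_eq_succ_mul_of_eq_div {k e p : ℝ} (hk : k + 1 ≠ 0) (hd : e + k - 1 ≠ 0)
    (hp : p = k / ((k + 1) * (e + k - 1))) : k / (e + k - 1) = (k + 1) * p := by
  rw [hp]; field_simp

lemma sub_one_div_add_mul_sub_two_eq {k e p : ℝ} (hk : k + 1 ≠ 0) (hd : e + k - 1 ≠ 0)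
    (hp : p = k / ((k + 1) * (e + k - 1))) : (e - 1) / (e + k - 1) + p * (k - 2) = 1 - 3 * p := by
  rw [hp]; field_simp; ring

lemma three_mul_lt_one_of_eq_div {k e p : ℝ} (hk : 2 ≤ k) (he : 1 < e)
    (hp : p = k / ((k + 1) * (e + k - 1))) : 3 * p < 1 := by
  rw [hp, mul_div_assoc', div_lt_one (by nlinarith)]
  nlinarith

/-- **Decomposition of `k`-randomized response (used in Corollary 4.2).**
With `p = k/((k+1)(e^ε0 + k - 1))`, for any distinct `j₀ ≠ j₁` and any `x`,
`kRR(x) = p·Unif([k]) + p·δ_{j₀} + p·δ_{j₁} + (1-3p)·LO` for some distribution `LO`. -/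
theorem kRR_decomposition (k : ℕ) (hk : 2 ≤ k) (ε0 : ℝ) (hε0 : 0 < ε0)
    (p : ℝ) (hp : p = (k : ℝ) / (((k : ℝ) + 1) * (Real.exp ε0 + k - 1)))
    (j₀ j₁ x : Fin k) (hj : j₀ ≠ j₁) :
    ∃ LO : Measure (Fin k), IsProbabilityMeasure LO ∧
      kRR k ε0 x = ENNReal.ofReal p • unifFin k + ENNReal.ofReal p • Measure.dirac j₀ +
        ENNReal.ofReal p • Measure.dirac j₁ + ENNReal.ofReal (1 - 3 * p) • LO := by
  have he : 1 < Real.exp ε0 := Real.one_lt_exp_iff.mpr hε0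
  have hk2 : (2 : ℝ) ≤ k := by exact_mod_cast hk
  have hk1 : (k : ℝ) + 1 ≠ 0 := by positivity
  have hd : 0 < Real.exp ε0 + k - 1 := by linarith
  have hp0 : 0 ≤ p := hp ▸ by positivity
  have ha0 : 0 ≤ (Real.exp ε0 - 1) / (Real.exp ε0 + k - 1) := div_nonneg (by linarith) hd.le
  set rest := ENNReal.ofReal ((Real.exp ε0 - 1) / (Real.exp ε0 + k - 1)) • Measure.dirac x +
    ENNReal.ofReal p • Measure.count.restrict ({j₀, j₁}ᶜ : Set (Fin k))
  have hmass : rest Set.univ = ENNReal.ofReal (1 - 3 * p) := by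
    simp only [rest, Measure.add_apply, Measure.smul_apply, Measure.restrict_apply_univ,
      count_compl_pair hj, measure_univ, smul_eq_mul, mul_one, Fintype.card_fin]
    rw [← ENNReal.ofReal_natCast, Nat.cast_sub hk, Nat.cast_ofNat, ← ENNReal.ofReal_mul hp0,
      ← ENNReal.ofReal_add ha0 (mul_nonneg hp0 (by linarith)),
      sub_one_div_add_mul_sub_two_eq hk1 hd.ne' hp]
  obtain ⟨LO, hLO, hrest⟩ := exists_isProbabilityMeasure_eq_measure_univ_smul (μ := rest)
    (by simpa [hmass] using three_mul_lt_one_of_eq_div hk2 he hp) (by simp [hmass])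
  refine ⟨LO, hLO, ?_⟩
  rw [← hmass, ← hrest, kRR, div_eq_succ_mul_of_eq_div hk1 hd.ne' hp,
    ofReal_succ_mul_smul_unifFin (by omega) p,
    count_eq_dirac_add_dirac_add_restrict_compl hj]
  simp only [rest, smul_add]
  abel

end

end ShuffleDP
end

section
/- Let n ≥ 1 be an integer and p ∈ [0,1]. Let C ∼ Bin(n−1, p) and, conditionally on C, A ∼ Bin(C, 1/2); let P be the law of (A+1, C−A) and Q the law of (A, C−A+1), both distributions on ℕ×ℕ. Then for every (a,b) ∈ ℕ×ℕ, b·P({(a,b)}) = a·Q({(a,b)}); in particular, whenever b ≥ 1 and Q({(a,b)}) > 0, P({(a,b)}) = (a/b)·Q({(a,b)}). -/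
open MeasureTheory ProbabilityTheory
open scoped ENNReal NNReal

namespace ShuffleDP

noncomputable section

/-!
Since `A ≤ C` almost surely, the maps `(A, C) ↦ (A + 1, C - A)` and `(A, C) ↦ (A, C - A + 1)`
are injective where it matters, so `P{(a+1, b+1)}` and `Q{(a+1, b+1)}` are the masses of `(A, C)`
at `(a, a+b+1)` and `(a+1, a+b+1)`. The common factor `Bin(n-1, p){a+b+1}` cancels, and since
`Bin(m, 1/2)` weights every outcome by `2⁻ᵐ`, what remains is
`(b+1)·C(a+b+1, a) = (a+1)·C(a+b+1, a+1)`. If `a = 0` or `b = 0`, both sides vanish.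
-/

lemma ofMass_apply_eq_of_mem {α : Type*} [MeasurableSpace α] (f : α → ℝ≥0∞) {S : Set α}
    (hS : MeasurableSet S) {a₀ : α} (ha₀ : a₀ ∈ S) (h : ∀ a ∈ S, a ≠ a₀ → f a = 0) :
    ofMass f S = f a₀ := by
  rw [ofMass, Measure.sum_apply _ hS, tsum_eq_single a₀]
  · simp [Measure.dirac_apply' _ hS, ha₀]
  · intro a ha
    by_cases haS : a ∈ S
    · simp [h a haS ha]
    · simp [Measure.dirac_apply' _ hS, haS]

lemma binomMass_of_lt {m k : ℕ} (h : m < k) (q : ℝ) : binomMass m q k = 0 := by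
  simp [binomMass, Nat.choose_eq_zero_of_lt h]

lemma succ_mul_binomMass_half (a b : ℕ) :
    ((b + 1 : ℕ) : ℝ≥0∞) * binomMass (a + b + 1) (1 / 2) a
      = ((a + 1 : ℕ) : ℝ≥0∞) * binomMass (a + b + 1) (1 / 2) (a + 1) := by
  have hchoose : ((b + 1 : ℕ) : ℝ) * (a + b + 1).choose a
      = ((a + 1 : ℕ) : ℝ) * (a + b + 1).choose (a + 1) := by
    have := Nat.choose_succ_right_eq (a + b + 1) a
    rw [show a + b + 1 - a = b + 1 by omega] at this
    exact_mod_cast by linarith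
  rw [binomMass, binomMass, ← ENNReal.ofReal_natCast, ← ENNReal.ofReal_natCast,
    ← ENNReal.ofReal_mul (by positivity), ← ENNReal.ofReal_mul (by positivity),
    show a + b + 1 - a = b + 1 by omega, show a + b + 1 - (a + 1) = b by omega]
  congr 1
  linear_combination ((1 / 2 : ℝ) ^ a * (1 / 2 : ℝ) ^ (b + 1)) * hchoose

def pairMass (n : ℕ) (p : ℝ) (w : ℕ × ℕ) : ℝ≥0∞ :=
  binomMass (n - 1) p w.2 * binomMass w.2 (1 / 2) w.1

lemma pairJoint_eq_ofMass (n : ℕ) (p : ℝ) : pairJoint n p = ofMass (pairMass n p) := rfl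

lemma map_pairJoint_singleton (n : ℕ) (p : ℝ) {g : ℕ × ℕ → ℕ × ℕ} {y w₀ : ℕ × ℕ}
    (hw₀ : g w₀ = y) (hinj : ∀ w, g w = y → w.1 ≤ w.2 → w = w₀) :
    (pairJoint n p).map g {y} = pairMass n p w₀ := by
  rw [Measure.map_apply (measurable_of_countable g) (measurableSet_singleton y),
    pairJoint_eq_ofMass]
  refine ofMass_apply_eq_of_mem _ (measurableSet_singleton y |>.preimage
    (measurable_of_countable g)) hw₀ fun w hw hne => ?_
  have hlt : w.2 < w.1 := lt_of_not_ge fun hle => hne (hinj w hw hle)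
  simp [pairMass, binomMass_of_lt hlt]

lemma pairP_singleton_zero (n : ℕ) (p : ℝ) (b : ℕ) : pairP n p {(0, b)} = 0 := by
  rw [pairP, Measure.map_apply (measurable_of_countable _) (measurableSet_singleton _)]
  convert measure_empty (μ := pairJoint n p)
  ext
  simp

lemma pairQ_singleton_zero (n : ℕ) (p : ℝ) (a : ℕ) : pairQ n p {(a, 0)} = 0 := by
  rw [pairQ, Measure.map_apply (measurable_of_countable _) (measurableSet_singleton _)]
  convert measure_empty (μ := pairJoint n p)
  ext
  simp

lemma pairP_singleton_succ (n : ℕ) (p : ℝ) (a b : ℕ) :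
    pairP n p {(a + 1, b)} = pairMass n p (a, a + b) :=
  map_pairJoint_singleton n p (by simp) fun ⟨_, _⟩ hw hle => by
    simp only [Prod.mk.injEq] at hw ⊢
    omega

lemma pairQ_singleton_succ (n : ℕ) (p : ℝ) (a b : ℕ) :
    pairQ n p {(a, b + 1)} = pairMass n p (a, a + b) :=
  map_pairJoint_singleton n p (by simp) fun ⟨_, _⟩ hw hle => by
    simp only [Prod.mk.injEq] at hw ⊢
    omega

lemma natCast_mul_pairP_singleton (n : ℕ) (p : ℝ) (a b : ℕ) :
    (b : ℝ≥0∞) * pairP n p {(a, b)} = (a : ℝ≥0∞) * pairQ n p {(a, b)} := by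
  rcases a with _ | a
  · simp [pairP_singleton_zero]
  rcases b with _ | b
  · simp [pairQ_singleton_zero]
  rw [pairP_singleton_succ, pairQ_singleton_succ, pairMass, pairMass,
    show a + (b + 1) = a + b + 1 by omega, show a + 1 + b = a + b + 1 by omega,
    mul_left_comm, succ_mul_binomMass_half, mul_left_comm]

theorem pair_likelihood_ratio_general (n : ℕ) (p : ℝ) :
    ∀ a b : ℕ,
      (b : ℝ≥0∞) * pairP n p {(a, b)} = (a : ℝ≥0∞) * pairQ n p {(a, b)} ∧
      (1 ≤ b → 0 < pairQ n p {(a, b)} →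
        pairP n p {(a, b)} = ((a : ℝ≥0∞) / (b : ℝ≥0∞)) * pairQ n p {(a, b)}) := by
  intro a b
  refine ⟨natCast_mul_pairP_singleton n p a b, fun hb _ => ?_⟩
  have hb₀ : (b : ℝ≥0∞) ≠ 0 := by exact_mod_cast (Nat.one_le_iff_ne_zero.mp hb)
  rw [ENNReal.div_eq_inv_mul, mul_assoc, ← natCast_mul_pairP_singleton, ← mul_assoc,
    ENNReal.inv_mul_cancel hb₀ (ENNReal.natCast_ne_top b), one_mul]

/-- **Likelihood-ratio identity for the pair of binomial-count distributions.**
With `P` the law of `(A+1, C-A)` and `Q` the law of `(A, C-A+1)`,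
`b·P({(a,b)}) = a·Q({(a,b)})` for all `(a,b)`, and `P({(a,b)}) = (a/b)·Q({(a,b)})`
whenever `b ≥ 1` and `Q({(a,b)}) > 0`. -/
theorem pair_likelihood_ratio (n : ℕ) (hn : 1 ≤ n) (p : ℝ) (hp : p ∈ Set.Icc (0 : ℝ) 1) :
    ∀ a b : ℕ,
      (b : ℝ≥0∞) * pairP n p {(a, b)} = (a : ℝ≥0∞) * pairQ n p {(a, b)} ∧
      (1 ≤ b → 0 < pairQ n p {(a, b)} →
        pairP n p {(a, b)} = ((a : ℝ≥0∞) / (b : ℝ≥0∞)) * pairQ n p {(a, b)}) :=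
  pair_likelihood_ratio_general n p

end

end ShuffleDP
end
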